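/- arXiv:1601.01537 — 5 statements merged into one kernel-verified Lean document; each statement's English description precedes it below -/
import Mathlib

section
/- With a local orthonormal frame {e₁,…,e₆, ξ} on a 7-manifold with G₂ structure and induced almost contact metric structure (φ,ξ,η,g) with fundamental 2-form Φ, one has (∇_{e_i}Φ)(ξ, e_k) = -g(∇_{e_i}ξ, ξ × e_k) for all i,k ∈ {1,…,6}. Consequently the invariant i₆(∇Φ) = Σ_{i,k} ((∇_{e_i}Φ)(ξ,e_k))² vanishes if and only if ∇_{e_i}ξ = 0 for all i = 1,…,6. -/
open scoped RealInnerProductSpace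

/-- With a local orthonormal frame `{e₁,…,e₆,ξ}` on a 7-manifold with
G₂ structure and induced almost contact metric structure,
`(∇_{e_i}Φ)(ξ, e_k) = -g(∇_{e_i}ξ, ξ × e_k)` for all `i,k`, and
`i₆(∇Φ) = Σ_{i,k} ((∇_{e_i}Φ)(ξ,e_k))²` vanishes iff `∇_{e_i}ξ = 0` for all `i`. -/
theorem i6_vanishes_iff
    {V : Type*} [NormedAddCommGroup V] [InnerProductSpace ℝ V]
    (cross : V → V → V)
    (hanti : ∀ x y : V, cross x y = - cross y x)
    (hskew : ∀ x y z : V, ⟪cross x y, z⟫ = - ⟪cross x z, y⟫)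
    (nabla : V → V → V) (D : V → ℝ → ℝ)
    (hD0 : ∀ x, D x 0 = 0) (hD1 : ∀ x, D x 1 = 0)
    (hDg : ∀ x y z : V, D x ⟪y, z⟫ = ⟪nabla x y, z⟫ + ⟪y, nabla x z⟫)
    (ξ : V) (e : Fin 6 → V)
    (hON : Orthonormal ℝ (Fin.snoc e ξ : Fin 7 → V))
    -- `{ξ × e_k}` is an orthonormal frame of the distribution orthogonal to `ξ`:
    (hspan : ∀ w : V, ⟪w, ξ⟫ = 0 → (∀ k, ⟪w, cross ξ (e k)⟫ = 0) → w = 0)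
    (Φ : V → V → ℝ) (hΦ : ∀ x y, Φ x y = ⟪x, cross ξ y⟫)
    (nablaPhi : V → V → V → ℝ)
    (hnablaPhi : ∀ x y z, nablaPhi x y z
      = D x (Φ y z) - Φ (nabla x y) z - Φ y (nabla x z)) :
    (∀ i k, nablaPhi (e i) ξ (e k) = - ⟪nabla (e i) ξ, cross ξ (e k)⟫) ∧
    ((∑ i : Fin 6, ∑ k : Fin 6, (nablaPhi (e i) ξ (e k)) ^ 2 = 0) ↔
      ∀ i, nabla (e i) ξ = 0) := by
  have hc0 : cross ξ ξ = 0 := by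
    have h := hanti ξ ξ
    have h2 : cross ξ ξ + cross ξ ξ = 0 := by nth_rewrite 2 [h]; abel
    have h3 : (2 : ℝ) • cross ξ ξ = 0 := by rw [two_smul]; exact h2
    simpa using h3
  have hΦξ : ∀ y, Φ ξ y = 0 := by
    intro y
    rw [hΦ, real_inner_comm, hskew, hc0, inner_zero_left, neg_zero]
  have h1 : ∀ i k, nablaPhi (e i) ξ (e k) = - ⟪nabla (e i) ξ, cross ξ (e k)⟫ := by
    intro i k
    rw [hnablaPhi, hΦξ, hΦξ, hD0, hΦ]
    ring
  have hξξ : (⟪ξ, ξ⟫ : ℝ) = 1 := by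
    have h := hON.1 (Fin.last 6)
    simp only [Fin.snoc_last] at h
    rw [real_inner_self_eq_norm_mul_norm, h]; norm_num
  have horth : ∀ x, ⟪nabla x ξ, ξ⟫ = 0 := by
    intro x
    have h := hDg x ξ ξ
    rw [hξξ, hD1] at h
    have hs : ⟪nabla x ξ, ξ⟫ = ⟪ξ, nabla x ξ⟫ := real_inner_comm _ _
    linarith
  refine ⟨h1, ?_, ?_⟩
  · intro hsum i
    have h0 : ∀ k, nablaPhi (e i) ξ (e k) = 0 := by
      intro k
      have hi := (Finset.sum_eq_zero_iff_of_nonneg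
        (fun j _ => Finset.sum_nonneg fun k _ => sq_nonneg _)).mp hsum i (Finset.mem_univ i)
      have hk := (Finset.sum_eq_zero_iff_of_nonneg
        (fun k _ => sq_nonneg _)).mp hi k (Finset.mem_univ k)
      exact pow_eq_zero_iff two_ne_zero |>.mp hk
    refine hspan _ (horth (e i)) fun k => ?_
    have := h0 k
    rw [h1 i k] at this
    linarith
  · intro h
    refine Finset.sum_eq_zero fun i _ => Finset.sum_eq_zero fun k _ => ?_
    rw [h1, h i, inner_zero_left, neg_zero]
    ring
end

section
/- With notation as above, (∇_ξ Φ)(ξ, e_k) = -g(∇_ξ ξ, ξ × e_k) for each k, and hence the invariant i₁₆(∇Φ) = Σ_k ((∇_ξ Φ)(ξ, e_k))² vanishes if and only if ∇_ξ ξ = 0. -/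
open scoped RealInnerProductSpace

/-! Since `ξ × ξ = 0`, the skew-symmetry of `⟪x × y, z⟫` gives `⟪ξ, ξ × z⟫ = 0`, so
`Φ(ξ, ·) = 0`; the Leibniz rule then kills two of the three terms of `(∇_ξ Φ)(ξ, e_k)`,
leaving `-⟪∇_ξ ξ, ξ × e_k⟫`. Differentiating `⟪ξ, ξ⟫ = 1` shows `∇_ξ ξ ⟂ ξ`, so `∇_ξ ξ` vanishes
exactly when all its components along the `ξ × e_k` do, i.e. when the sum of their squares does. -/

lemma cross_self_eq_zero {M : Type*} [AddCommGroup M] [IsAddTorsionFree M] {cross : M → M → M}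
    (hanti : ∀ x y : M, cross x y = - cross y x) (x : M) :
    cross x x = 0 :=
  self_eq_neg.mp (hanti x x)

lemma inner_self_cross_eq_zero {V : Type*} [NormedAddCommGroup V] [InnerProductSpace ℝ V]
    {cross : V → V → V} (hanti : ∀ x y : V, cross x y = - cross y x)
    (hskew : ∀ x y z : V, ⟪cross x y, z⟫ = - ⟪cross x z, y⟫) (x z : V) :
    ⟪x, cross x z⟫ = 0 := by
  have := IsAddTorsionFree.of_isTorsionFree ℝ V
  rw [real_inner_comm, hskew, cross_self_eq_zero hanti, inner_zero_left, neg_zero]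

lemma inner_nabla_self_eq_zero_of_inner_self_eq_one
    {V : Type*} [NormedAddCommGroup V] [InnerProductSpace ℝ V]
    {nabla : V → V → V} {D : V → ℝ → ℝ} {x : V} (hD1 : D x 1 = 0)
    (hDg : ∀ y z : V, D x ⟪y, z⟫ = ⟪nabla x y, z⟫ + ⟪y, nabla x z⟫)
    {ξ : V} (hξ : ⟪ξ, ξ⟫ = 1) :
    ⟪nabla x ξ, ξ⟫ = 0 := by
  have h := hDg ξ ξ
  rw [hξ, hD1, real_inner_comm (nabla x ξ)] at h
  linarith

lemma nablaPhi_self_eq_neg_inner {V : Type*} [NormedAddCommGroup V] [InnerProductSpace ℝ V]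
    {cross nabla : V → V → V} {D : V → ℝ → ℝ} (hD0 : ∀ x, D x 0 = 0) {ξ : V}
    (hΦξ : ∀ z, ⟪ξ, cross ξ z⟫ = 0) {Φ : V → V → ℝ} (hΦ : ∀ x y, Φ x y = ⟪x, cross ξ y⟫)
    {nablaPhi : V → V → V → ℝ}
    (hnablaPhi : ∀ x y z, nablaPhi x y z = D x (Φ y z) - Φ (nabla x y) z - Φ y (nabla x z))
    (x z : V) :
    nablaPhi x ξ z = - ⟪nabla x ξ, cross ξ z⟫ := by
  rw [hnablaPhi, hΦ, hΦ, hΦ, hΦξ, hΦξ, hD0]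
  ring

lemma sum_sq_neg_eq_zero_iff {ι : Type*} [Fintype ι] (a : ι → ℝ) :
    ∑ k, (-a k) ^ 2 = 0 ↔ ∀ k, a k = 0 := by
  simp only [Finset.sum_eq_zero_iff_of_nonneg (fun k _ => sq_nonneg (-a k)),
    Finset.mem_univ, true_implies, sq_eq_zero_iff, neg_eq_zero]

/-- With notation as in Statement 5,
`(∇_ξ Φ)(ξ, e_k) = -g(∇_ξ ξ, ξ × e_k)` for each `k`, hence
`i₁₆(∇Φ) = Σ_k ((∇_ξ Φ)(ξ, e_k))²` vanishes iff `∇_ξ ξ = 0`. -/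
theorem i16_vanishes_iff
    {V : Type*} [NormedAddCommGroup V] [InnerProductSpace ℝ V]
    (cross : V → V → V)
    (hanti : ∀ x y : V, cross x y = - cross y x)
    (hskew : ∀ x y z : V, ⟪cross x y, z⟫ = - ⟪cross x z, y⟫)
    (nabla : V → V → V) (D : V → ℝ → ℝ)
    (hD0 : ∀ x, D x 0 = 0) (hD1 : ∀ x, D x 1 = 0)
    (hDg : ∀ x y z : V, D x ⟪y, z⟫ = ⟪nabla x y, z⟫ + ⟪y, nabla x z⟫)
    (ξ : V) (e : Fin 6 → V)
    (hON : Orthonormal ℝ (Fin.snoc e ξ : Fin 7 → V))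
    -- `{ξ × e_k}` spans the orthogonal complement of `ξ`:
    (hspan : ∀ w : V, ⟪w, ξ⟫ = 0 → (∀ k, ⟪w, cross ξ (e k)⟫ = 0) → w = 0)
    (Φ : V → V → ℝ) (hΦ : ∀ x y, Φ x y = ⟪x, cross ξ y⟫)
    (nablaPhi : V → V → V → ℝ)
    (hnablaPhi : ∀ x y z, nablaPhi x y z
      = D x (Φ y z) - Φ (nabla x y) z - Φ y (nabla x z)) :
    (∀ k, nablaPhi ξ ξ (e k) = - ⟪nabla ξ ξ, cross ξ (e k)⟫) ∧
    ((∑ k : Fin 6, (nablaPhi ξ ξ (e k)) ^ 2 = 0) ↔ nabla ξ ξ = 0) := by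
  have hformula := nablaPhi_self_eq_neg_inner hD0 (inner_self_cross_eq_zero hanti hskew ξ) hΦ
    hnablaPhi ξ
  have hξ : ⟪ξ, ξ⟫ = 1 := by
    rw [real_inner_self_eq_norm_sq, ← Fin.snoc_last (α := fun _ => V) ξ e, hON.1, one_pow]
  have hperp := inner_nabla_self_eq_zero_of_inner_self_eq_one (hD1 ξ) (hDg ξ) hξ
  refine ⟨fun k => hformula (e k), ?_⟩
  simp only [hformula, sum_sq_neg_eq_zero_iff]
  exact ⟨hspan _ hperp, fun h k => by rw [h, inner_zero_left]⟩
end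

section
/- Let φ be a nearly parallel G₂ structure (so that the cross product satisfies ∇_x(y × z) = (∇_x y) × z + y × (∇_x z) + A(x,y,z) with the torsion term vanishing in the relevant contractions used below, specifically ∇_ξ(ξ × z) = (∇_ξ ξ) × z + ξ × ∇_ξ z holds). Then (∇_ξ Φ)(e_j, e_k) = -g(∇_ξ ξ, e_j × e_k) for all j,k ∈ {1,…,6}, and i₅(∇Φ) = Σ_{j,k}((∇_ξ Φ)(e_j,e_k))² = 0 if and only if ∇_ξ ξ = 0. -/
open scoped RealInnerProductSpace

/-- For an almost contact metric structure induced by a nearly parallel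
G₂ structure (so `∇_ξ(ξ × z) = (∇_ξ ξ) × z + ξ × ∇_ξ z`), one has
`(∇_ξ Φ)(e_j, e_k) = -g(∇_ξ ξ, e_j × e_k)` for all `j,k`, and
`i₅(∇Φ) = Σ_{j,k}((∇_ξ Φ)(e_j,e_k))² = 0` iff `∇_ξ ξ = 0`. -/
theorem i5_vanishes_iff_nearly_parallel
    {V : Type*} [NormedAddCommGroup V] [InnerProductSpace ℝ V]
    (cross : V → V → V)
    (hanti : ∀ x y : V, cross x y = - cross y x)
    (hskew : ∀ x y z : V, ⟪cross x y, z⟫ = - ⟪cross x z, y⟫)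
    (nabla : V → V → V) (D : V → ℝ → ℝ)
    (hD0 : ∀ x, D x 0 = 0) (hD1 : ∀ x, D x 1 = 0)
    (hDg : ∀ x y z : V, D x ⟪y, z⟫ = ⟪nabla x y, z⟫ + ⟪y, nabla x z⟫)
    (ξ : V) (e : Fin 6 → V)
    -- nearly parallel G₂ structure:
    (hnp : ∀ z : V, nabla ξ (cross ξ z)
      = cross (nabla ξ ξ) z + cross ξ (nabla ξ z))
    (hON : Orthonormal ℝ (Fin.snoc e ξ : Fin 7 → V))
    -- the `e_j × e_k` span the tangent space:
    (hspan : ∀ w : V, (∀ j k, ⟪w, cross (e j) (e k)⟫ = 0) → w = 0)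
    (Φ : V → V → ℝ) (hΦ : ∀ x y, Φ x y = ⟪x, cross ξ y⟫)
    (nablaPhi : V → V → V → ℝ)
    (hnablaPhi : ∀ x y z, nablaPhi x y z
      = D x (Φ y z) - Φ (nabla x y) z - Φ y (nabla x z)) :
    (∀ j k, nablaPhi ξ (e j) (e k) = - ⟪nabla ξ ξ, cross (e j) (e k)⟫) ∧
    ((∑ j : Fin 6, ∑ k : Fin 6, (nablaPhi ξ (e j) (e k)) ^ 2 = 0) ↔
      nabla ξ ξ = 0) := by

  have key : ∀ j k, nablaPhi ξ (e j) (e k) = - ⟪nabla ξ ξ, cross (e j) (e k)⟫ := by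
    intro j k
    have h2 : ⟪e j, cross (nabla ξ ξ) (e k)⟫ = -⟪nabla ξ ξ, cross (e j) (e k)⟫ := by
      rw [real_inner_comm, hskew, hanti (nabla ξ ξ) (e j), ← neg_neg (cross (e j) (nabla ξ ξ))]
      rw [neg_neg, inner_neg_left, hskew, real_inner_comm]
      ring
    rw [hnablaPhi, hΦ, hΦ, hΦ, hDg, hnp, inner_add_right, h2]
    ring
  refine ⟨key, ?_, ?_⟩
  · intro hsum
    apply hspan
    intro j k
    have h1 : ∀ i ∈ Finset.univ, (0:ℝ) ≤ ∑ k : Fin 6, (nablaPhi ξ (e i) (e k)) ^ 2 :=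
      fun i _ => Finset.sum_nonneg (fun k _ => sq_nonneg _)
    have h2 := (Finset.sum_eq_zero_iff_of_nonneg h1).mp hsum j (Finset.mem_univ j)
    have h3 := (Finset.sum_eq_zero_iff_of_nonneg (fun i _ => sq_nonneg _)).mp h2 k (Finset.mem_univ k)
    have h4 : nablaPhi ξ (e j) (e k) = 0 := by
      exact pow_eq_zero_iff (by norm_num) |>.mp h3
    rw [key] at h4
    linarith
  · intro h
    apply Finset.sum_eq_zero
    intro j _
    apply Finset.sum_eq_zero
    intro k _
    rw [key, h]
    simp
end

section
/- Let (φ,ξ,η,g) be an almost contact metric structure induced by a G₂ structure with local orthonormal frame {e₁,…,e₆,ξ} and set v = Σᵢ eᵢ × (∇_{e_i}ξ). Then (∇_{e_i}Φ)(e_i, ξ) = g(e_i × ∇_{e_i}ξ, ξ) and i₁₀(∇Φ) = Σ_{i,j}(∇_{e_i}Φ)(e_i,ξ)(∇_{e_j}Φ)(e_j,ξ) = g(v,ξ)². In particular i₁₀(∇Φ) ≠ 0 whenever g(ξ,v) ≠ 0. -/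
open scoped RealInnerProductSpace

/-- For an almost contact metric structure induced by a G₂ structure, with
`v = Σᵢ eᵢ × (∇_{e_i}ξ)`, one has `(∇_{e_i}Φ)(e_i, ξ) = g(e_i × ∇_{e_i}ξ, ξ)` and
`i₁₀(∇Φ) = Σ_{i,j}(∇_{e_i}Φ)(e_i,ξ)(∇_{e_j}Φ)(e_j,ξ) = g(v,ξ)²`; in particular
`i₁₀(∇Φ) ≠ 0` whenever `g(ξ,v) ≠ 0`. -/
theorem i10_eq
    {V : Type*} [NormedAddCommGroup V] [InnerProductSpace ℝ V]
    (cross : V → V → V)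
    (hanti : ∀ x y : V, cross x y = - cross y x)
    (hskew : ∀ x y z : V, ⟪cross x y, z⟫ = - ⟪cross x z, y⟫)
    (nabla : V → V → V) (D : V → ℝ → ℝ)
    (hD0 : ∀ x, D x 0 = 0)
    (hDg : ∀ x y z : V, D x ⟪y, z⟫ = ⟪nabla x y, z⟫ + ⟪y, nabla x z⟫)
    (ξ : V) (e : Fin 6 → V)
    (hON : Orthonormal ℝ (Fin.snoc e ξ : Fin 7 → V))
    (Φ : V → V → ℝ) (hΦ : ∀ x y, Φ x y = ⟪x, cross ξ y⟫)
    (nablaPhi : V → V → V → ℝ)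
    (hnablaPhi : ∀ x y z, nablaPhi x y z
      = D x (Φ y z) - Φ (nabla x y) z - Φ y (nabla x z))
    (v : V) (hv : v = ∑ i : Fin 6, cross (e i) (nabla (e i) ξ)) :
    (∀ i, nablaPhi (e i) (e i) ξ = ⟪cross (e i) (nabla (e i) ξ), ξ⟫) ∧
    (∑ i : Fin 6, ∑ j : Fin 6, nablaPhi (e i) (e i) ξ * nablaPhi (e j) (e j) ξ
      = ⟪v, ξ⟫ ^ 2) ∧
    (⟪ξ, v⟫ ≠ 0 →
      ∑ i : Fin 6, ∑ j : Fin 6, nablaPhi (e i) (e i) ξ * nablaPhi (e j) (e j) ξ ≠ 0) := by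

  have hcross0 : cross ξ ξ = 0 := by
    have h := hanti ξ ξ
    have h2 : (2:ℝ) • cross ξ ξ = 0 := by
      rw [two_smul]; nth_rewrite 1 [h]; abel
    simpa using (smul_eq_zero.mp h2).resolve_left (by norm_num)
  have h1 : ∀ i, nablaPhi (e i) (e i) ξ = ⟪cross (e i) (nabla (e i) ξ), ξ⟫ := by
    intro i
    have hPhi0 : Φ (e i) ξ = 0 := by rw [hΦ, hcross0, inner_zero_right]
    have hPhi0' : Φ (nabla (e i) (e i)) ξ = 0 := by
      rw [hΦ, hcross0, inner_zero_right]
    rw [hnablaPhi, hPhi0, hD0, hPhi0', hΦ]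
    set w := nabla (e i) ξ
    have key : ⟪(e i : V), cross ξ w⟫ = - ⟪cross (e i) w, ξ⟫ := by
      calc ⟪(e i : V), cross ξ w⟫ = ⟪cross ξ w, e i⟫ := real_inner_comm _ _
        _ = -⟪cross ξ (e i), w⟫ := hskew _ _ _
        _ = -⟪-cross (e i) ξ, w⟫ := by rw [← hanti]
        _ = ⟪cross (e i) ξ, w⟫ := by rw [inner_neg_left]; ring
        _ = -⟪cross (e i) w, ξ⟫ := by rw [hskew]
    rw [key]; ring
  refine ⟨h1, ?_, ?_⟩
  · have hsum : ∑ i : Fin 6, nablaPhi (e i) (e i) ξ = ⟪v, ξ⟫ := by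
      rw [hv, sum_inner]
      exact Finset.sum_congr rfl fun i _ => h1 i
    rw [← Finset.sum_mul_sum, hsum]; ring
  · intro hne
    have hsum : ∑ i : Fin 6, nablaPhi (e i) (e i) ξ = ⟪v, ξ⟫ := by
      rw [hv, sum_inner]
      exact Finset.sum_congr rfl fun i _ => h1 i
    rw [← Finset.sum_mul_sum, hsum]
    have hvξ : ⟪v, ξ⟫ ≠ 0 := by rw [real_inner_comm]; exact hne
    exact mul_ne_zero hvξ hvξ
end

section
/- In the class 𝒞₁₂ of almost contact metric structures, the defining relation (∇_xΦ)(y,z) = η(x)η(y)(∇_ξΦ)(ξ,z) + η(x)η(z)(∇_ξΦ)(y,ξ) implies: if (∇_ξη)(φx) = 0 for all vector fields x, then ∇Φ = 0. Consequently, any non-cosymplectic structure of class 𝒞₁₂ has a vector field x₀ with (δΦ)(x₀) = (∇_ξη)(φx₀) ≠ 0, so the class 𝒞₁₂ is not contained in the class of semi-cosymplectic manifolds. -/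
open scoped RealInnerProductSpace

/-!
In class `𝒞₁₂` every component of `∇Φ` is a multiple of `(∇_ξΦ)(ξ, ·)`, since antisymmetry gives
`(∇_ξΦ)(y, ξ) = -(∇_ξΦ)(ξ, y)`. Hence `∇Φ` vanishes once `(∇_ξΦ)(ξ, ·) = -(∇_ξη)(φ ·)` does.
In an orthonormal frame containing `ξ` the other frame vectors lie in `ker η`, so the defining
relation kills their diagonal terms in the trace `δΦ`. Thus `δΦ = -(∇_ξΦ)(ξ, ·) = (∇_ξη)(φ ·)`,
which is nonzero somewhere as soon as the structure is not cosymplectic.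
-/

section ClassC12

variable {V : Type*}

/-- The defining relation of the Chinea–Gonzalez class `𝒞₁₂`, for a tensor `N` playing `∇Φ`. -/
def IsClassC12 (ξ : V) (η : V → ℝ) (N : V → V → V → ℝ) : Prop :=
  ∀ x y z, N x y z = η x * η y * N ξ ξ z + η x * η z * N ξ y ξ

theorem IsClassC12.eq_zero {ξ : V} {η : V → ℝ} {N : V → V → V → ℝ} (hN : IsClassC12 ξ η N)
    (halt : ∀ x y z, N x y z = -N x z y) (hξξ : ∀ z, N ξ ξ z = 0) (x y z : V) :
    N x y z = 0 := by
  have hyξ : N ξ y ξ = 0 := by rw [halt, hξξ, neg_zero]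
  rw [hN, hξξ, hyξ]
  ring

theorem IsClassC12.sum_diag [NormedAddCommGroup V] [InnerProductSpace ℝ V] {ι : Type*}
    [Fintype ι] (b : OrthonormalBasis ι ℝ V) (i₀ : ι) {η : V → ℝ} (hη : ∀ x, η x = ⟪b i₀, x⟫)
    {N : V → V → V → ℝ} (hN : IsClassC12 (b i₀) η N) (x : V) :
    ∑ a, N (b a) (b a) x = N (b i₀) (b i₀) x := by
  refine Finset.sum_eq_single i₀ (fun a _ ha => ?_) (by simp)
  rw [hN, hη, b.inner_eq_zero (Ne.symm ha)]
  ring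

end ClassC12

theorem C12_not_semicosymplectic_general
    {V : Type*} [NormedAddCommGroup V] [InnerProductSpace ℝ V]
    (b : OrthonormalBasis (Fin 7) ℝ V)
    (ξ : V) (hξb : ξ = b (Fin.last 6))
    (η : V → ℝ) (hη : ∀ x, η x = ⟪ξ, x⟫)
    (phi : V → V)
    (nablaPhi : V → V → V → ℝ)
    -- `∇Φ` is antisymmetric in its last two arguments:
    (halt : ∀ x y z, nablaPhi x y z = - nablaPhi x z y)
    (nablaEta : V → V → ℝ)
    -- the identity `(∇_ξΦ)(ξ,x) = -(∇_ξη)(φx)`: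
    (hid : ∀ x, nablaPhi ξ ξ x = - nablaEta ξ (phi x))
    -- defining relation of the class 𝒞₁₂:
    (hC12 : ∀ x y z, nablaPhi x y z
      = η x * η y * nablaPhi ξ ξ z + η x * η z * nablaPhi ξ y ξ)
    (deltaPhi : V → ℝ)
    (hdeltaPhi : ∀ x, deltaPhi x = -(∑ a : Fin 7, nablaPhi (b a) (b a) x)) :
    ((∀ x, nablaEta ξ (phi x) = 0) → ∀ x y z, nablaPhi x y z = 0) ∧
    ((¬ ∀ x y z, nablaPhi x y z = 0) →
      ∃ x₀, deltaPhi x₀ = nablaEta ξ (phi x₀) ∧ nablaEta ξ (phi x₀) ≠ 0) := by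
  subst hξb
  have hcosymp (h : ∀ x, nablaEta (b (Fin.last 6)) (phi x) = 0) : ∀ x y z, nablaPhi x y z = 0 :=
    IsClassC12.eq_zero hC12 halt fun z => by rw [hid, h, neg_zero]
  refine ⟨hcosymp, fun hne => ?_⟩
  obtain ⟨x₀, hx₀⟩ : ∃ x₀, nablaEta (b (Fin.last 6)) (phi x₀) ≠ 0 := by
    by_contra! h
    exact hne (hcosymp h)
  refine ⟨x₀, ?_, hx₀⟩
  rw [hdeltaPhi, IsClassC12.sum_diag b _ hη hC12, hid, neg_neg]

/-- For an almost contact metric structure of Chinea–Gonzalez class 𝒞₁₂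
(defining relation `(∇_xΦ)(y,z) = η(x)η(y)(∇_ξΦ)(ξ,z) + η(x)η(z)(∇_ξΦ)(y,ξ)`):
if `(∇_ξη)(φx) = 0` for all `x` then `∇Φ = 0`; consequently any non-cosymplectic
structure of class 𝒞₁₂ admits `x₀` with `(δΦ)(x₀) = (∇_ξη)(φx₀) ≠ 0`, so 𝒞₁₂ is not
contained in the class of semi-cosymplectic manifolds. -/
theorem C12_not_semicosymplectic
    {V : Type*} [NormedAddCommGroup V] [InnerProductSpace ℝ V]
    (b : OrthonormalBasis (Fin 7) ℝ V)
    (ξ : V) (hξb : ξ = b (Fin.last 6))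
    (η : V → ℝ) (hη : ∀ x, η x = ⟪ξ, x⟫)
    (phi : V → V)
    (hphi2 : ∀ x, phi (phi x) = -x + η x • ξ)
    (hηphi : ∀ x, η (phi x) = 0)
    (Φ : V → V → ℝ) (hΦ : ∀ x y, Φ x y = ⟪x, phi y⟫)
    (nablaPhi : V → V → V → ℝ)
    -- `∇Φ` is antisymmetric in its last two arguments:
    (halt : ∀ x y z, nablaPhi x y z = - nablaPhi x z y)
    (nablaEta : V → V → ℝ)
    -- the identity `(∇_ξΦ)(ξ,x) = -(∇_ξη)(φx)`:
    (hid : ∀ x, nablaPhi ξ ξ x = - nablaEta ξ (phi x))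
    -- defining relation of the class 𝒞₁₂:
    (hC12 : ∀ x y z, nablaPhi x y z
      = η x * η y * nablaPhi ξ ξ z + η x * η z * nablaPhi ξ y ξ)
    (deltaPhi : V → ℝ)
    (hdeltaPhi : ∀ x, deltaPhi x = -(∑ a : Fin 7, nablaPhi (b a) (b a) x)) :
    ((∀ x, nablaEta ξ (phi x) = 0) → ∀ x y z, nablaPhi x y z = 0) ∧
    ((¬ ∀ x y z, nablaPhi x y z = 0) →
      ∃ x₀, deltaPhi x₀ = nablaEta ξ (phi x₀) ∧ nablaEta ξ (phi x₀) ≠ 0) :=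
  C12_not_semicosymplectic_general b ξ hξb η hη phi nablaPhi halt nablaEta hid hC12 deltaPhi
    hdeltaPhi
end
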